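/- Let Q be an odd positive integer, P ∈ {1,...,Q−1} with gcd(P,Q) = 1, q = exp(iπP/Q), fix n ∈ {1,...,Q} and set d = Q+1−n. Define φ_j(w) = (−i)^j q^{j(j−1)/2 + n j} w^{−Q+j} for j = 0,...,d−1, and operators X, Y, Z on functions on ℂ∖{0} by (X f)(w) = −i q⁻¹ w (q^n f(w) − q^{−n} f(q⁻² w))/(q − q⁻¹), (Y f)(w) = i q^{−n+1} (f(w) − f(q⁻² w))/((q − q⁻¹) w), (Z f)(w) = q^{−n} f(q⁻² w). Then the ℂ-linear span of {φ_0, φ_1, ..., φ_{d−1}} is invariant under X, Y and Z. -/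

import Mathlib

/-! In the basis `φ_j ∝ w^(j-Q)` the operator `Z` is diagonal, `X` (multiplication by `w` up
to a `q`-difference) sends `φ_j` to a multiple of `φ_{j+1}`, and `Y` sends `φ_{j+1}` to a
multiple of `φ_j`. The chain closes at both ends: the coefficient of `X φ_j` is proportional
to `qⁿ - q^(2Q - 2j - n)`, which vanishes at the top index `j = Q - n`, and `Y φ_0 = 0`
because `w^(-Q)` is fixed by `w ↦ q⁻² w` when `q^(2Q) = 1`. -/

/-- The point `q⁻² w` of the punctured complex plane. -/
noncomputable def shiftPt (q : ℂ) (hq : q ≠ 0) (w : {z : ℂ // z ≠ 0}) : {z : ℂ // z ≠ 0} :=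
  ⟨q ^ (-2 : ℤ) * (w : ℂ), mul_ne_zero (zpow_ne_zero _ hq) w.2⟩

/-- `(X f)(w) = −i q⁻¹ w (qⁿ f(w) − q⁻ⁿ f(q⁻² w))/(q − q⁻¹)`. -/
noncomputable def Xop (q : ℂ) (hq : q ≠ 0) (n : ℤ) (f : {z : ℂ // z ≠ 0} → ℂ) :
    {z : ℂ // z ≠ 0} → ℂ :=
  fun w => -Complex.I * q⁻¹ * (w : ℂ) * (q ^ n * f w - q ^ (-n) * f (shiftPt q hq w)) / (q - q⁻¹)

/-- `(Y f)(w) = i q^(−n+1) (f(w) − f(q⁻² w))/((q − q⁻¹) w)`. -/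
noncomputable def Yop (q : ℂ) (hq : q ≠ 0) (n : ℤ) (f : {z : ℂ // z ≠ 0} → ℂ) :
    {z : ℂ // z ≠ 0} → ℂ :=
  fun w => Complex.I * q ^ (-n + 1) * (f w - f (shiftPt q hq w)) / ((q - q⁻¹) * (w : ℂ))

/-- `(Z f)(w) = q⁻ⁿ f(q⁻² w)`. -/
noncomputable def Zop (q : ℂ) (hq : q ≠ 0) (n : ℤ) (f : {z : ℂ // z ≠ 0} → ℂ) :
    {z : ℂ // z ≠ 0} → ℂ :=
  fun w => q ^ (-n) * f (shiftPt q hq w)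

/-- The function `φ_j(w) = (−i)^j q^(j(j−1)/2 + n j) w^(−Q+j)`. -/
noncomputable def phi (q : ℂ) (Q n j : ℕ) : {z : ℂ // z ≠ 0} → ℂ :=
  fun w => (-Complex.I) ^ j * q ^ (j * (j - 1) / 2 + n * j) * (w : ℂ) ^ (-(Q : ℤ) + (j : ℤ))

open Submodule Set

section LinearOperators

variable (q : ℂ) (hq : q ≠ 0) (n : ℤ)

noncomputable def Xlin :
    ({z : ℂ // z ≠ 0} → ℂ) →ₗ[ℂ] ({z : ℂ // z ≠ 0} → ℂ) where
  toFun := Xop q hq n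
  map_add' f g := by funext w; simp only [Xop, Pi.add_apply]; ring
  map_smul' c f := by
    funext w; simp only [Xop, Pi.smul_apply, smul_eq_mul, RingHom.id_apply]; ring

noncomputable def Ylin :
    ({z : ℂ // z ≠ 0} → ℂ) →ₗ[ℂ] ({z : ℂ // z ≠ 0} → ℂ) where
  toFun := Yop q hq n
  map_add' f g := by funext w; simp only [Yop, Pi.add_apply]; ring
  map_smul' c f := by
    funext w; simp only [Yop, Pi.smul_apply, smul_eq_mul, RingHom.id_apply]; ring

noncomputable def Zlin :
    ({z : ℂ // z ≠ 0} → ℂ) →ₗ[ℂ] ({z : ℂ // z ≠ 0} → ℂ) where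
  toFun := Zop q hq n
  map_add' f g := by funext w; simp only [Zop, Pi.add_apply]; ring
  map_smul' c f := by
    funext w; simp only [Zop, Pi.smul_apply, smul_eq_mul, RingHom.id_apply]; ring

end LinearOperators

theorem Submodule.apply_mem_span_of_forall {R M : Type*} [Semiring R] [AddCommMonoid M]
    [Module R M] (T : M →ₗ[R] M) {s : Set M} (h : ∀ x ∈ s, T x ∈ span R s) {f : M}
    (hf : f ∈ span R s) : T f ∈ span R s :=
  (map_span_le T s _).mpr h ⟨f, hf, rfl⟩

section Phi

variable {q : ℂ} (hq : q ≠ 0) {Q n j : ℕ}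

theorem phi_shiftPt (w : {z : ℂ // z ≠ 0}) :
    phi q Q n j (shiftPt q hq w) = q ^ (2 * (Q : ℤ) - 2 * j) * phi q Q n j w := by
  simp only [phi, shiftPt]
  rw [mul_zpow, ← zpow_mul, show (-2 : ℤ) * (-(Q : ℤ) + j) = 2 * (Q : ℤ) - 2 * j by ring]
  ring

theorem phi_succ (w : {z : ℂ // z ≠ 0}) :
    phi q Q n (j + 1) w = -Complex.I * q ^ (j + n) * (w : ℂ) * phi q Q n j w := by
  simp only [phi]
  rw [Nat.triangle_succ,
    show j * (j - 1) / 2 + j + n * (j + 1) = j * (j - 1) / 2 + n * j + (j + n) by ring,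
    pow_add, pow_succ, Nat.cast_succ, ← add_assoc (-(Q : ℤ)), zpow_add_one₀ w.2]
  ring

theorem Zop_phi :
    Zop q hq n (phi q Q n j) =
      (q ^ (-(n : ℤ)) * q ^ (2 * (Q : ℤ) - 2 * j)) • phi q Q n j := by
  funext w
  simp only [Zop, phi_shiftPt hq, Pi.smul_apply, smul_eq_mul]
  ring

theorem Xop_phi :
    Xop q hq n (phi q Q n j) =
      (q⁻¹ * (q ^ (j + n))⁻¹ * (q ^ (n : ℤ) - q ^ (-(n : ℤ)) * q ^ (2 * (Q : ℤ) - 2 * j)) /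
        (q - q⁻¹)) • phi q Q n (j + 1) := by
  funext w
  have : q ^ (j + n) ≠ 0 := pow_ne_zero _ hq
  simp only [Xop, phi_shiftPt hq, Pi.smul_apply, smul_eq_mul, phi_succ]
  rw [div_mul_eq_mul_div]
  congr 1
  field_simp

theorem Xop_phi_of_add_eq (h : j + n = Q) : Xop q hq n (phi q Q n j) = 0 := by
  rw [Xop_phi hq, ← zpow_add₀ hq, ← h]
  push_cast
  ring_nf
  simp

theorem Yop_phi_succ :
    Yop q hq n (phi q Q n (j + 1)) =
      (Complex.I * q ^ (-(n : ℤ) + 1) * (1 - q ^ (2 * (Q : ℤ) - 2 * ((j : ℤ) + 1))) *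
        (-Complex.I) * q ^ (j + n) / (q - q⁻¹)) • phi q Q n j := by
  funext w
  have : (w : ℂ) ≠ 0 := w.2
  simp only [Yop, phi_shiftPt hq, Pi.smul_apply, smul_eq_mul, phi_succ, Nat.cast_succ]
  rw [mul_comm (q - q⁻¹) (w : ℂ), ← div_div, div_mul_eq_mul_div]
  congr 1
  field_simp
  ring

theorem Yop_phi_zero (h : q ^ (2 * Q) = 1) : Yop q hq n (phi q Q n 0) = 0 := by
  have h' : q ^ (2 * (Q : ℤ)) = 1 := by exact_mod_cast h
  funext w
  simp [Yop, phi_shiftPt hq, h']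

end Phi

theorem exp_pi_mul_I_div_pow_two_mul (P Q : ℕ) :
    Complex.exp (↑Real.pi * Complex.I * (P : ℂ) / (Q : ℂ)) ^ (2 * Q) = 1 := by
  rcases Nat.eq_zero_or_pos Q with rfl | hQ
  · simp
  have : (Q : ℂ) ≠ 0 := Nat.cast_ne_zero.mpr hQ.ne'
  rw [← Complex.exp_nat_mul]
  convert Complex.exp_int_mul_two_pi_mul_I P using 2
  push_cast
  field_simp

noncomputable def phiSpan (q : ℂ) (Q n : ℕ) : Submodule ℂ ({z : ℂ // z ≠ 0} → ℂ) :=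
  span ℂ (range fun j : Fin (Q + 1 - n) => phi q Q n j)

section Invariance

variable {q : ℂ} (hq : q ≠ 0) {Q n : ℕ}

theorem phi_mem_phiSpan {j : ℕ} (hj : j < Q + 1 - n) : phi q Q n j ∈ phiSpan q Q n :=
  subset_span ⟨⟨j, hj⟩, rfl⟩

theorem Xop_phi_mem_phiSpan {j : ℕ} (hj : j < Q + 1 - n) :
    Xop q hq n (phi q Q n j) ∈ phiSpan q Q n := by
  by_cases htop : j + n = Q
  · rw [Xop_phi_of_add_eq hq htop]
    exact zero_mem _
  · rw [Xop_phi hq]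
    exact smul_mem _ _ (phi_mem_phiSpan (by omega))

theorem Yop_phi_mem_phiSpan (h : q ^ (2 * Q) = 1) {j : ℕ} (hj : j < Q + 1 - n) :
    Yop q hq n (phi q Q n j) ∈ phiSpan q Q n := by
  cases j with
  | zero =>
    rw [Yop_phi_zero hq h]
    exact zero_mem _
  | succ j =>
    rw [Yop_phi_succ hq]
    exact smul_mem _ _ (phi_mem_phiSpan (by omega))

theorem Zop_phi_mem_phiSpan {j : ℕ} (hj : j < Q + 1 - n) :
    Zop q hq n (phi q Q n j) ∈ phiSpan q Q n := by
  rw [Zop_phi hq]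
  exact smul_mem _ _ (phi_mem_phiSpan hj)

variable {f : {z : ℂ // z ≠ 0} → ℂ}

theorem Xop_mem_phiSpan (hf : f ∈ phiSpan q Q n) : Xop q hq n f ∈ phiSpan q Q n :=
  apply_mem_span_of_forall (Xlin q hq n)
    (forall_mem_range.mpr fun j => Xop_phi_mem_phiSpan hq j.isLt) hf

theorem Yop_mem_phiSpan (h : q ^ (2 * Q) = 1) (hf : f ∈ phiSpan q Q n) :
    Yop q hq n f ∈ phiSpan q Q n :=
  apply_mem_span_of_forall (Ylin q hq n)
    (forall_mem_range.mpr fun j => Yop_phi_mem_phiSpan hq h j.isLt) hf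

theorem Zop_mem_phiSpan (hf : f ∈ phiSpan q Q n) : Zop q hq n f ∈ phiSpan q Q n :=
  apply_mem_span_of_forall (Zlin q hq n)
    (forall_mem_range.mpr fun j => Zop_phi_mem_phiSpan hq j.isLt) hf

end Invariance

theorem stmt_11_general (Q P : ℕ)
    (q : ℂ) (hq : q = Complex.exp (↑Real.pi * Complex.I * (P : ℂ) / (Q : ℂ)))
    (hq0 : q ≠ 0)
    (n : ℕ) (d : ℕ) (hd : d = Q + 1 - n) :
    let S : Submodule ℂ ({z : ℂ // z ≠ 0} → ℂ) :=
      Submodule.span ℂ (Set.range fun j : Fin d => phi q Q n (j : ℕ))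
    ∀ f ∈ S, Xop q hq0 (n : ℤ) f ∈ S ∧ Yop q hq0 (n : ℤ) f ∈ S ∧ Zop q hq0 (n : ℤ) f ∈ S := by
  intro S f hf
  subst hd
  have hq2Q : q ^ (2 * Q) = 1 := hq ▸ exp_pi_mul_I_div_pow_two_mul P Q
  exact ⟨Xop_mem_phiSpan hq0 hf, Yop_mem_phiSpan hq0 hq2Q hf, Zop_mem_phiSpan hq0 hf⟩

/-- For `q = exp(iπP/Q)`, `n ∈ {1,...,Q}`, `d = Q+1−n`, the ℂ-linear span of
`{φ_0, φ_1, ..., φ_{d−1}}` is invariant under the operators `X`, `Y` and `Z`. -/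
theorem stmt_11 (Q P : ℕ) (hQodd : Odd Q) (hQpos : 0 < Q)
    (hP1 : 1 ≤ P) (hPQ : P ≤ Q - 1) (hcop : Nat.Coprime P Q)
    (q : ℂ) (hq : q = Complex.exp (↑Real.pi * Complex.I * (P : ℂ) / (Q : ℂ)))
    (hq0 : q ≠ 0)
    (n : ℕ) (hn1 : 1 ≤ n) (hnQ : n ≤ Q) (d : ℕ) (hd : d = Q + 1 - n) :
    let S : Submodule ℂ ({z : ℂ // z ≠ 0} → ℂ) :=
      Submodule.span ℂ (Set.range fun j : Fin d => phi q Q n (j : ℕ))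
    ∀ f ∈ S, Xop q hq0 (n : ℤ) f ∈ S ∧ Yop q hq0 (n : ℤ) f ∈ S ∧ Zop q hq0 (n : ℤ) f ∈ S :=
  stmt_11_general Q P q hq hq0 n d hd
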